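/- Let W be a complex vector space, σ a conjugate-linear involution on W, q, m, r, n ∈ ℕ, and ζ ∈ ℝ with 0 < ζ ≤ 1. Let x : Fin q → W with σ(x k) = x k for all k and l : Fin m → W. Let L := Submodule.span ℂ (Set.range x ∪ Set.range l), and assume Submodule.span ℂ (Set.range x) = L ⊓ Submodule.map σ L, finrank_ℂ(L ⊓ Submodule.map σ L) = r, and finrank_ℂ L = n + r. Fix K₀ : Fin r → Fin q and J₀ : Fin n → Fin m. Let B₀ : Fin (r + 2n) → W be the concatenation of x ∘ K₀, (fun j => (2:ℂ) • Re(l (J₀ j))), and (fun j => (2:ℂ) • Im(l (J₀ j))), and let w : Fin (q + 2m) → W be the concatenation of x, (fun j => (2:ℂ) • Re(l j)), and (fun j => (2:ℂ) • Im(l j)). Assume: (a) B₀ is linearly independent over ℝ (W regarded as a real vector space); and (b) for every P : Fin (r + 2n) → Fin (q + 2m) and every alternating ℝ-multilinear map ψ : AlternatingMap ℝ W ℝ (Fin (r+2n)), |ψ(w ∘ P)| ≤ ζ⁻¹ · |ψ(B₀)|. Then: (1) the tuple T₀ : Fin (r + n) → W obtained by concatenating x ∘ K₀ and l ∘ J₀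 is ℂ-linearly independent; and (2) for every r₁, n₁ with r₁ + n₁ = r + n, every K : Fin r₁ → Fin q, every J : Fin n₁ → Fin m, and every alternating ℂ-multilinear map φ : AlternatingMap ℂ W ℂ (Fin (r+n)), ‖φ(x ∘ K, l ∘ J)‖ ≤ (4 · ζ⁻¹ · Real.sqrt (n + r))^(n + r) · ‖φ(T₀)‖. -/

import Mathlib

/-!
Each entry of `w` is compared with `B₀` by replacing one vector of `B₀` with it; by Cramer's rule
the bound on real alternating forms says that this entry lies in the real span of `B₀` with
coordinates of size at most `ζ⁻¹`. Since `B₀` is fixed by `σ`, it is also `ℂ`-linearly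
independent, and `2 Re v = v + σ v`, `2 Im v = -i (v - σ v)` turn it into the `ℂ`-basis
`(x ∘ K₀, l ∘ J₀, σ (l ∘ J₀))` of the same span, in which `x k` and `l j` have coordinates of size
at most `2 ζ⁻¹`. Hence `T₀` is linearly independent, spans `L` by counting dimensions, and the
coordinates of `(x ∘ K, l ∘ J)` with respect to `T₀` form a matrix with entries bounded by `2 ζ⁻¹`;
Hadamard's inequality bounds its determinant, which is the quotient `φ (x ∘ K, l ∘ J) / φ T₀`.
-/

open Submodule

/-- The real part of a vector with respect to a conjugate-linear involution `σ`:
`Re v := (1/2 : ℂ) • (v + σ v)`. -/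
noncomputable def conjRe {W : Type*} [AddCommGroup W] [Module ℂ W]
    (σ : W →ₛₗ[starRingEnd ℂ] W) (v : W) : W :=
  ((1 : ℂ) / 2) • (v + σ v)

/-- The imaginary part of a vector with respect to a conjugate-linear involution `σ`:
`Im v := (-I/2) • (v - σ v)`. -/
noncomputable def conjIm {W : Type*} [AddCommGroup W] [Module ℂ W]
    (σ : W →ₛₗ[starRingEnd ℂ] W) (v : W) : W :=
  (-(Complex.I) / 2) • (v - σ v)

open Function Module

section AlternatingForms

variable {K W : Type*} [Field K] [AddCommGroup W] [Module K W]

theorem LinearIndependent.exists_alternatingMap_eq_one {ι : Type*} [Fintype ι] [DecidableEq ι]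
    {B : ι → W} (hB : LinearIndependent K B) : ∃ ψ : W [⋀^ι]→ₗ[K] K, ψ B = 1 := by
  obtain ⟨π, hπ⟩ := LinearMap.exists_extend (LinearMap.id : span K (Set.range B) →ₗ[K] _)
  refine ⟨(Basis.span hB).det.compLinearMap π, ?_⟩
  have hπB : (fun i => π (B i)) = Basis.span hB := funext fun i => by
    rw [Basis.span_apply]
    exact LinearMap.congr_fun hπ ⟨B i, subset_span (Set.mem_range_self i)⟩
  rw [AlternatingMap.compLinearMap_apply]
  simp only [hπB, Basis.det_self]

theorem AlternatingMap.map_update_sum_smul_self {R M N ι : Type*} [CommSemiring R]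
    [AddCommMonoid M] [Module R M] [AddCommMonoid N] [Module R N] [Fintype ι] [DecidableEq ι]
    (ψ : M [⋀^ι]→ₗ[R] N) (B : ι → M) (c : ι → R) (α : ι) :
    ψ (Function.update B α (∑ β, c β • B β)) = c α • ψ B := by
  rw [ψ.map_update_sum, Finset.sum_eq_single α]
  · rw [ψ.map_update_smul, update_eq_self]
  · intro β _ hβ
    rw [ψ.map_update_smul, ψ.map_update_self B hβ.symm, smul_zero]
  · exact fun h => absurd (Finset.mem_univ α) h

theorem LinearIndependent.mem_span_of_forall_alternatingMap {d : ℕ} {B : Fin d → W}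
    (hB : LinearIndependent K B) (α : Fin d) {v : W}
    (H : ∀ ψ : W [⋀^Fin d]→ₗ[K] K, ψ B = 0 → ψ (Function.update B α v) = 0) :
    v ∈ span K (Set.range B) := by
  -- a form `Ψ` with `Ψ (v, B) = 1` gives `Ψ (B α, ·)`, which vanishes on `B` but not on
  -- `update B α v`
  by_contra hv
  obtain ⟨Ψ, hΨ⟩ := (linearIndependent_finCons.2 ⟨hB, hv⟩).exists_alternatingMap_eq_one
  have hne : (0 : Fin (d + 1)) ≠ α.succ := (Fin.succ_ne_zero α).symm
  have h0 : Ψ.curryLeft (B α) B = 0 :=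
    Ψ.map_eq_zero_of_eq _ (i := 0) (j := α.succ) (by simp) hne
  have hswap :
      Matrix.vecCons (B α) (Function.update B α v) = Fin.cons v B ∘ Equiv.swap 0 α.succ := by
    ext k
    refine Fin.cases ?_ (fun k => ?_) k
    · simp
    · rcases eq_or_ne k α with rfl | hk
      · simp
      · simp [update_of_ne hk, Equiv.swap_apply_of_ne_of_ne (Fin.succ_ne_zero k)
          (Fin.succ_injective _ |>.ne hk)]
  have h1 : Ψ.curryLeft (B α) (Function.update B α v) = -1 := by
    rw [AlternatingMap.curryLeft_apply_apply, hswap, Ψ.map_swap _ hne, hΨ]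
  simpa [h1] using H _ h0

theorem LinearIndependent.exists_sum_smul_eq_norm_le {F : Type*} [NormedField F] [Module F W]
    {d : ℕ} {B : Fin d → W} (hB : LinearIndependent F B) (α₀ : Fin d) {v : W} {C : ℝ}
    (H : ∀ α (ψ : W [⋀^Fin d]→ₗ[F] F), ‖ψ (Function.update B α v)‖ ≤ C * ‖ψ B‖) :
    ∃ c : Fin d → F, ∑ α, c α • B α = v ∧ ∀ α, ‖c α‖ ≤ C := by
  have hv : v ∈ span F (Set.range B) := hB.mem_span_of_forall_alternatingMap α₀ fun ψ hψ => by
    simpa [hψ] using H α₀ ψ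
  obtain ⟨c, rfl⟩ := (mem_span_range_iff_exists_fun F).1 hv
  obtain ⟨ψ, hψ⟩ := hB.exists_alternatingMap_eq_one
  refine ⟨c, rfl, fun α => ?_⟩
  simpa [ψ.map_update_sum_smul_self, hψ] using H α ψ

end AlternatingForms

theorem AlternatingMap.map_sum_smul_eq_det_mul {R M ι : Type*} [CommRing R] [AddCommGroup M]
    [Module R M] [Fintype ι] [DecidableEq ι] (φ : M [⋀^ι]→ₗ[R] R) (T : ι → M)
    (A : Matrix ι ι R) : φ (fun i => ∑ p, A i p • T p) = A.det * φ T := by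
  set g := Fintype.linearCombination R T
  calc φ (fun i => ∑ p, A i p • T p) = φ.compLinearMap g (fun i => A i) := by
        simp [g, Fintype.linearCombination_apply]
    _ = A.det * φ T := by
        rw [(φ.compLinearMap g).eq_smul_basis_det (Pi.basisFun R ι)]
        simp only [g, AlternatingMap.compLinearMap_apply, Pi.basisFun_apply,
          Fintype.linearCombination_apply_single, one_smul, Pi.basisFun_det,
          AlternatingMap.smul_apply, smul_eq_mul]
        exact mul_comm _ _

theorem LinearIndependent.of_span_le_of_card_le {K M ι κ : Type*} [DivisionRing K] [AddCommGroup M]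
    [Module K M] [Fintype ι] [Fintype κ] {b : ι → M} {e : κ → M} (hb : LinearIndependent K b)
    (hle : span K (Set.range b) ≤ span K (Set.range e))
    (hcard : Fintype.card κ ≤ Fintype.card ι) : LinearIndependent K e := by
  rw [linearIndependent_iff_card_le_finrank_span]
  have : FiniteDimensional K (span K (Set.range e)) :=
    FiniteDimensional.span_of_finite K (Set.finite_range e)
  calc Fintype.card κ ≤ Fintype.card ι := hcard
    _ = finrank K (span K (Set.range b)) := (finrank_span_eq_card hb).symm
    _ ≤ _ := Submodule.finrank_mono hle

theorem LinearIndependent.sum_smul_append_eq_left {K M : Type*} [Ring K] [AddCommGroup M]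
    [Module K M] {k n : ℕ} {f : Fin k → M} {g : Fin n → M}
    (h : LinearIndependent K (Fin.append f g)) {e : Fin (k + n) → K} {t : Fin k → K}
    (he : ∑ α, e α • Fin.append f g α = ∑ p, t p • f p) (p : Fin k) :
    e (Fin.castAdd n p) = t p := by
  have hzero : ∑ α, (e - Fin.append t (0 : Fin n → K)) α • Fin.append f g α = 0 := by
    simp [sub_smul, he, Fin.sum_univ_add]
  simpa [sub_eq_zero] using Fintype.linearIndependent_iff.1 h _ hzero (Fin.castAdd n p)

theorem Fin.append_comp_mem_range_union {α : Type*} {q m r n : ℕ} (x : Fin q → α) (l : Fin m → α)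
    (K : Fin r → Fin q) (J : Fin n → Fin m) (i : Fin (r + n)) :
    Fin.append (x ∘ K) (l ∘ J) i ∈ Set.range x ∪ Set.range l := by
  induction i using Fin.addCases with
  | left i => simp
  | right j => simp

theorem Real.prod_le_sum_div_card_pow {ι : Type*} [Fintype ι] (z : ι → ℝ) (hz : ∀ i, 0 ≤ z i) :
    ∏ i, z i ≤ ((∑ i, z i) / Fintype.card ι) ^ Fintype.card ι := by
  set N := Fintype.card ι
  rcases Nat.eq_zero_or_pos N with hN | hN
  · have : IsEmpty ι := Fintype.card_eq_zero_iff.1 hN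
    simp [hN]
  have hgm := Real.geom_mean_le_arith_mean_weighted Finset.univ (fun _ => (N : ℝ)⁻¹) z
    (fun _ _ => inv_nonneg.2 N.cast_nonneg) (by simp [N, hN.ne']) fun i _ => hz i
  rw [Real.finsetProd_rpow _ _ fun i _ => hz i, ← Finset.mul_sum, inv_mul_eq_div] at hgm
  have hprod : 0 ≤ ∏ i, z i := Finset.prod_nonneg fun i _ => hz i
  calc ∏ i, z i = ((∏ i, z i) ^ (N⁻¹ : ℝ)) ^ N := (Real.rpow_inv_natCast_pow hprod hN.ne').symm
    _ ≤ _ := pow_le_pow_left₀ (Real.rpow_nonneg hprod _) hgm N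

-- Hadamard-type bound: AM-GM for the eigenvalues of `Mᴴ * M`.
open scoped ComplexOrder in
theorem Matrix.norm_det_sq_le {n : Type*} [Fintype n] [DecidableEq n] (M : Matrix n n ℂ) :
    ‖M.det‖ ^ 2 ≤ ((∑ i, ∑ j, ‖M i j‖ ^ 2) / Fintype.card n) ^ Fintype.card n := by
  have hA := Matrix.posSemidef_conjTranspose_mul_self M
  have hprod : ∏ i, hA.1.eigenvalues i = ‖M.det‖ ^ 2 := by
    have h := hA.1.det_eq_prod_eigenvalues
    simp only [det_mul, det_conjTranspose, Complex.star_def, Complex.conj_mul'] at h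
    exact Complex.ofReal_injective (by simpa using h.symm)
  have hsum : ∑ i, hA.1.eigenvalues i = ∑ i, ∑ j, ‖M i j‖ ^ 2 := by
    have h := hA.1.trace_eq_sum_eigenvalues
    simp only [trace, diag_apply, mul_apply, conjTranspose_apply, Complex.star_def,
      Complex.conj_mul'] at h
    rw [Finset.sum_comm]
    exact Complex.ofReal_injective (by simpa using h.symm)
  rw [← hprod, ← hsum]
  exact Real.prod_le_sum_div_card_pow _ hA.eigenvalues_nonneg

theorem Matrix.norm_det_le_of_norm_le {n : Type*} [Fintype n] [DecidableEq n] (M : Matrix n n ℂ)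
    {ρ : ℝ} (hρ : 0 ≤ ρ) (h : ∀ i j, ‖M i j‖ ≤ ρ) :
    ‖M.det‖ ≤ (√(Fintype.card n) * ρ) ^ Fintype.card n := by
  set N := Fintype.card n
  have hentries : ∑ i, ∑ j, ‖M i j‖ ^ 2 ≤ N * (N * ρ ^ 2) := by
    calc ∑ i, ∑ j, ‖M i j‖ ^ 2 ≤ ∑ _i : n, ∑ _j : n, ρ ^ 2 := by gcongr; exact h _ _
      _ = N * (N * ρ ^ 2) := by simp [N]
  refine pow_le_pow_iff_left₀ (norm_nonneg _) (by positivity) two_ne_zero |>.1 ?_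
  calc ‖M.det‖ ^ 2 ≤ ((∑ i, ∑ j, ‖M i j‖ ^ 2) / N) ^ N := M.norm_det_sq_le
    _ ≤ (N * ρ ^ 2) ^ N := by
        gcongr
        rcases Nat.eq_zero_or_pos N with hN | hN
        · simp [hN]
        · rw [div_le_iff₀ (by positivity)]; linarith
    _ = ((√N * ρ) ^ N) ^ 2 := by
        rw [← pow_mul, mul_comm N 2, pow_mul, mul_pow √(N : ℝ), Real.sq_sqrt N.cast_nonneg]

theorem AlternatingMap.norm_map_sum_smul_le {M ι : Type*} [AddCommGroup M] [Module ℂ M]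
    [Fintype ι] [DecidableEq ι] (φ : M [⋀^ι]→ₗ[ℂ] ℂ) (T : ι → M) (A : Matrix ι ι ℂ) {ρ : ℝ}
    (hρ : 0 ≤ ρ) (hA : ∀ i p, ‖A i p‖ ≤ ρ) :
    ‖φ (fun i => ∑ p, A i p • T p)‖ ≤ (√(Fintype.card ι) * ρ) ^ Fintype.card ι * ‖φ T‖ := by
  rw [φ.map_sum_smul_eq_det_mul, norm_mul]
  gcongr
  exact A.norm_det_le_of_norm_le hρ hA

section ConjugateLinearInvolution

variable {W : Type*} [AddCommGroup W] [Module ℂ W] (σ : W →ₛₗ[starRingEnd ℂ] W)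

theorem two_smul_conjRe (v : W) : (2 : ℂ) • conjRe σ v = v + σ v := by
  rw [conjRe, smul_smul]; norm_num

theorem two_smul_conjIm (v : W) : (2 : ℂ) • conjIm σ v = -Complex.I • (v - σ v) := by
  rw [conjIm, smul_smul]; ring_nf

theorem conjRe_add_I_smul_conjIm (v : W) : conjRe σ v + Complex.I • conjIm σ v = v := by
  rw [conjRe, conjIm, smul_smul]
  have : Complex.I * (-Complex.I / 2) = 1 / 2 := by
    linear_combination (-1 / 2 : ℂ) * Complex.I_sq
  rw [this]
  module

theorem map_conjRe (hinv : ∀ w, σ (σ w) = w) (v : W) : σ (conjRe σ v) = conjRe σ v := by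
  simp [conjRe, hinv, add_comm, map_ofNat]

theorem map_conjIm (hinv : ∀ w, σ (σ w) = w) (v : W) : σ (conjIm σ v) = conjIm σ v := by
  simp only [conjIm, map_smulₛₗ, map_sub, hinv, map_div₀, map_neg, Complex.conj_I,
    map_ofNat]
  module

theorem conjRe_sum_smul_of_fixed {ι : Type*} [Fintype ι] {B : ι → W} (hB : ∀ i, σ (B i) = B i)
    (c : ι → ℂ) : conjRe σ (∑ i, c i • B i) = ∑ i, (c i).re • B i := by
  simp only [conjRe, map_sum, map_smulₛₗ, hB, ← Finset.sum_add_distrib, ← add_smul,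
    Complex.add_conj, Finset.smul_sum, smul_smul, ← Complex.coe_smul]
  congr! 2; push_cast; ring

theorem conjIm_sum_smul_of_fixed {ι : Type*} [Fintype ι] {B : ι → W} (hB : ∀ i, σ (B i) = B i)
    (c : ι → ℂ) : conjIm σ (∑ i, c i • B i) = ∑ i, (c i).im • B i := by
  simp only [conjIm, map_sum, map_smulₛₗ, hB, ← Finset.sum_sub_distrib, ← sub_smul,
    Complex.sub_conj, Finset.smul_sum, smul_smul, ← Complex.coe_smul]
  congr! 2; push_cast; linear_combination (-((c _).im : ℂ)) * Complex.I_sq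

theorem linearIndependent_complex_of_forall_fixed {ι : Type*} [Fintype ι] {B : ι → W}
    (hfix : ∀ i, σ (B i) = B i) (hB : LinearIndependent ℝ B) : LinearIndependent ℂ B := by
  rw [Fintype.linearIndependent_iff] at hB ⊢
  intro c hc i
  have hre := hB _ (by rw [← conjRe_sum_smul_of_fixed σ hfix, hc]; simp [conjRe]) i
  have him := hB _ (by rw [← conjIm_sum_smul_of_fixed σ hfix, hc]; simp [conjIm]) i
  exact Complex.ext hre him

end ConjugateLinearInvolution

section Frames

variable {W : Type*} [AddCommGroup W] [Module ℂ W] (σ : W →ₛₗ[starRingEnd ℂ] W) {q m r n : ℕ}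

/-- `(a, 2 Re y, 2 Im y)`, the shape of the tuples `B₀` and `w`. -/
noncomputable def realFrame (a : Fin r → W) (y : Fin n → W) : Fin (r + n + n) → W :=
  Fin.append (Fin.append a fun j => (2 : ℂ) • conjRe σ (y j)) fun j => (2 : ℂ) • conjIm σ (y j)

/-- `(a, y, σ y)`: a `ℂ`-basis of the span of `realFrame σ a y` when the latter is independent. -/
def complexFrame (a : Fin r → W) (y : Fin n → W) : Fin (r + n + n) → W :=
  Fin.append (Fin.append a y) fun j => σ (y j)

@[simp] theorem realFrame_left_left (a : Fin r → W) (y : Fin n → W) (i : Fin r) :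
    realFrame σ a y (Fin.castAdd n (Fin.castAdd n i)) = a i := by
  simp [realFrame]

@[simp] theorem realFrame_left_right (a : Fin r → W) (y : Fin n → W) (j : Fin n) :
    realFrame σ a y (Fin.castAdd n (Fin.natAdd r j)) = (2 : ℂ) • conjRe σ (y j) := by
  simp [realFrame]

@[simp] theorem realFrame_right (a : Fin r → W) (y : Fin n → W) (j : Fin n) :
    realFrame σ a y (Fin.natAdd (r + n) j) = (2 : ℂ) • conjIm σ (y j) := by
  simp [realFrame]

theorem exists_realFrame_comp_eq (a : Fin q → W) (y : Fin m → W) (f : Fin r → Fin q)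
    (g : Fin n → Fin m) : ∃ P, realFrame σ a y ∘ P = realFrame σ (a ∘ f) (y ∘ g) := by
  refine ⟨Fin.append (Fin.castAdd m ∘ Fin.append (Fin.castAdd m ∘ f) (Fin.natAdd q ∘ g))
    (Fin.natAdd (q + m) ∘ g), funext fun α => ?_⟩
  refine Fin.addCases (Fin.addCases (fun _ => ?_) (fun _ => ?_)) (fun _ => ?_) α <;> simp

theorem map_realFrame (hinv : ∀ w, σ (σ w) = w) {a : Fin r → W} (ha : ∀ i, σ (a i) = a i)
    (y : Fin n → W) (α : Fin (r + n + n)) : σ (realFrame σ a y α) = realFrame σ a y α := by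
  refine Fin.addCases (Fin.addCases (fun _ => ?_) (fun _ => ?_)) (fun _ => ?_) α <;>
    simp [ha, map_conjRe σ hinv, map_conjIm σ hinv, map_ofNat]

theorem span_realFrame_le (a : Fin r → W) (y : Fin n → W) :
    span ℂ (Set.range (realFrame σ a y)) ≤ span ℂ (Set.range (complexFrame σ a y)) := by
  have hmem : ∀ α, complexFrame σ a y α ∈ span ℂ (Set.range (complexFrame σ a y)) :=
    fun α => subset_span (Set.mem_range_self α)
  have ha (i : Fin r) := hmem (Fin.castAdd n (Fin.castAdd n i))
  have hy (j : Fin n) := hmem (Fin.castAdd n (Fin.natAdd r j))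
  have hσy (j : Fin n) := hmem (Fin.natAdd (r + n) j)
  simp only [complexFrame, Fin.append_left, Fin.append_right] at ha hy hσy
  rw [span_le]
  rintro - ⟨α, rfl⟩
  induction α using Fin.addCases with
  | left β =>
    induction β using Fin.addCases with
    | left i => rw [realFrame_left_left]; exact ha i
    | right j => rw [realFrame_left_right, two_smul_conjRe]; exact add_mem (hy j) (hσy j)
  | right j =>
    rw [realFrame_right, two_smul_conjIm]; exact smul_mem _ _ (sub_mem (hy j) (hσy j))

theorem linearIndependent_complexFrame (hinv : ∀ w, σ (σ w) = w) {a : Fin r → W}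
    (ha : ∀ i, σ (a i) = a i) {y : Fin n → W} (hind : LinearIndependent ℝ (realFrame σ a y)) :
    LinearIndependent ℂ (complexFrame σ a y) :=
  (linearIndependent_complex_of_forall_fixed σ (map_realFrame σ hinv ha y) hind
    ).of_span_le_of_card_le (span_realFrame_le σ a y) le_rfl

theorem exists_sum_smul_complexFrame_eq (a : Fin r → W) (y : Fin n → W) (c : Fin (r + n + n) → ℂ)
    {C : ℝ} (hc : ∀ α, ‖c α‖ ≤ C) :
    ∃ e : Fin (r + n + n) → ℂ, ∑ α, e α • complexFrame σ a y α = ∑ α, c α • realFrame σ a y α ∧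
      ∀ p : Fin (r + n), ‖e (Fin.castAdd n p)‖ ≤ 2 * C := by
  obtain ⟨c', c₃, rfl⟩ : ∃ c' c₃, c = Fin.append c' c₃ := ⟨_, _, Fin.append_castAdd_natAdd.symm⟩
  obtain ⟨c₁, c₂, rfl⟩ : ∃ c₁ c₂, c' = Fin.append c₁ c₂ := ⟨_, _, Fin.append_castAdd_natAdd.symm⟩
  have hc₁ (i : Fin r) : ‖c₁ i‖ ≤ C := by simpa using hc (Fin.castAdd n (Fin.castAdd n i))
  have hc₂ (j : Fin n) : ‖c₂ j‖ ≤ C := by simpa using hc (Fin.castAdd n (Fin.natAdd r j))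
  have hc₃ (j : Fin n) : ‖c₃ j‖ ≤ C := by simpa using hc (Fin.natAdd (r + n) j)
  refine ⟨Fin.append (Fin.append c₁ (c₂ - Complex.I • c₃)) (c₂ + Complex.I • c₃), ?_, ?_⟩
  · simp only [Fin.sum_univ_add, Fin.append_left, Fin.append_right, complexFrame,
      realFrame_left_left, realFrame_left_right, realFrame_right, two_smul_conjRe,
      two_smul_conjIm, add_assoc, ← Finset.sum_add_distrib]
    congr 1
    refine Finset.sum_congr rfl fun j _ => ?_
    simp only [Pi.add_apply, Pi.sub_apply, Pi.smul_apply, smul_eq_mul, smul_smul]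
    module
  · intro p
    induction p using Fin.addCases with
    | left i => simpa using (hc₁ i).trans (by linarith [(norm_nonneg _).trans (hc₁ i)])
    | right j =>
      simp only [Fin.append_left, Fin.append_right, Pi.sub_apply, Pi.smul_apply, smul_eq_mul]
      calc ‖c₂ j - Complex.I * c₃ j‖ ≤ ‖c₂ j‖ + ‖c₃ j‖ := by
            simpa using norm_sub_le (c₂ j) (Complex.I * c₃ j)
        _ ≤ 2 * C := by linarith [hc₂ j, hc₃ j]

theorem exists_complex_coeffs_of_realFrame {d : ℕ} {B : Fin d → W} (x : Fin q → W)
    (l : Fin m → W) {C : ℝ}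
    (hw : ∀ β, ∃ c : Fin d → ℝ, ∑ α, c α • B α = realFrame σ x l β ∧ ∀ α, |c α| ≤ C)
    {v : W} (hv : v ∈ Set.range x ∪ Set.range l) :
    ∃ c : Fin d → ℂ, ∑ α, c α • B α = v ∧ ∀ α, ‖c α‖ ≤ C := by
  rcases hv with ⟨k, rfl⟩ | ⟨j, rfl⟩
  · obtain ⟨c, hc, hcC⟩ := hw (Fin.castAdd m (Fin.castAdd m k))
    refine ⟨fun α => c α, ?_, fun α => by simpa using hcC α⟩
    simpa [Complex.coe_smul] using hc
  · obtain ⟨a, ha, haC⟩ := hw (Fin.castAdd m (Fin.natAdd q j))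
    obtain ⟨b, hb, hbC⟩ := hw (Fin.natAdd (q + m) j)
    simp only [realFrame_left_right, realFrame_right] at ha hb
    refine ⟨fun α => (a α + Complex.I * b α) / 2, ?_, fun α => ?_⟩
    · conv_rhs => rw [← conjRe_add_I_smul_conjIm σ (l j)]
      have h2 : (2 : ℂ) ≠ 0 := two_ne_zero
      rw [← smul_right_inj h2, smul_add, smul_comm (2 : ℂ) Complex.I, ← ha, ← hb]
      simp only [Finset.smul_sum, smul_smul, ← Finset.sum_add_distrib, ← Complex.coe_smul,
        ← add_smul]
      refine Finset.sum_congr rfl fun α _ => ?_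
      congr 1
      field_simp
    · calc ‖(a α + Complex.I * b α) / 2‖ ≤ (|a α| + |b α|) / 2 := by
            rw [norm_div, Complex.norm_two]
            gcongr
            simpa using norm_add_le (a α : ℂ) (Complex.I * b α)
        _ ≤ C := by linarith [haC α, hbC α]

theorem exists_coeffs_le_of_forall_alternatingMap_le (x : Fin q → W) (l : Fin m → W)
    (K₀ : Fin r → Fin q) (J₀ : Fin n → Fin m)
    (hind : LinearIndependent ℝ (realFrame σ (x ∘ K₀) (l ∘ J₀)))
    (hE : LinearIndependent ℂ (complexFrame σ (x ∘ K₀) (l ∘ J₀))) {C : ℝ}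
    (hb : ∀ (P : Fin (r + n + n) → Fin (q + m + m)) (ψ : W [⋀^Fin (r + n + n)]→ₗ[ℝ] ℝ),
      |ψ (realFrame σ x l ∘ P)| ≤ C * |ψ (realFrame σ (x ∘ K₀) (l ∘ J₀))|)
    {v : W} (hv : v ∈ Set.range x ∪ Set.range l)
    (hvT : v ∈ span ℂ (Set.range (Fin.append (x ∘ K₀) (l ∘ J₀)))) :
    ∃ t : Fin (r + n) → ℂ, ∑ p, t p • Fin.append (x ∘ K₀) (l ∘ J₀) p = v ∧
      ∀ p, ‖t p‖ ≤ 2 * C := by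
  obtain ⟨t, rfl⟩ := (mem_span_range_iff_exists_fun ℂ).1 hvT
  refine ⟨t, rfl, fun p => ?_⟩
  obtain ⟨P₀, hP₀⟩ := exists_realFrame_comp_eq σ x l K₀ J₀
  have hw (β : Fin (q + m + m)) := hind.exists_sum_smul_eq_norm_le (Fin.castAdd n p)
    (v := realFrame σ x l β) fun α ψ => by simpa [← hP₀, comp_update] using hb (update P₀ α β) ψ
  obtain ⟨c, hc, hcC⟩ := exists_complex_coeffs_of_realFrame σ x l hw hv
  obtain ⟨e, he, heC⟩ := exists_sum_smul_complexFrame_eq σ _ _ c hcC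
  rw [← hE.sum_smul_append_eq_left (he.trans hc) p]
  exact heC p

end Frames

theorem wedge_quotient_real_to_complex_general
    (W : Type*) [AddCommGroup W] [Module ℂ W]
    (σ : W →ₛₗ[starRingEnd ℂ] W) (hinv : ∀ w : W, σ (σ w) = w)
    (q m r n : ℕ) (ζ : ℝ) (hζ0 : 0 < ζ)
    (x : Fin q → W) (hx : ∀ k, σ (x k) = x k) (l : Fin m → W)
    (L : Submodule ℂ W) (hL : L = Submodule.span ℂ (Set.range x ∪ Set.range l))
    (hnr : Module.finrank ℂ ↥L = n + r)
    (K₀ : Fin r → Fin q) (J₀ : Fin n → Fin m)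
    (B₀ : Fin (r + n + n) → W)
    (hB₀ : B₀ = Fin.append
      (Fin.append (x ∘ K₀) (fun j => (2 : ℂ) • conjRe σ (l (J₀ j))))
      (fun j => (2 : ℂ) • conjIm σ (l (J₀ j))))
    (w : Fin (q + m + m) → W)
    (hw : w = Fin.append
      (Fin.append x (fun j => (2 : ℂ) • conjRe σ (l j)))
      (fun j => (2 : ℂ) • conjIm σ (l j)))
    (ha : LinearIndependent ℝ B₀)
    (hb : ∀ (P : Fin (r + n + n) → Fin (q + m + m)) (ψ : W [⋀^Fin (r + n + n)]→ₗ[ℝ] ℝ),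
      |ψ (w ∘ P)| ≤ ζ⁻¹ * |ψ B₀|)
    (T₀ : Fin (r + n) → W) (hT₀ : T₀ = Fin.append (x ∘ K₀) (l ∘ J₀)) :
    LinearIndependent ℂ T₀ ∧
      ∀ (r₁ n₁ : ℕ) (h : r₁ + n₁ = r + n) (K : Fin r₁ → Fin q) (J : Fin n₁ → Fin m)
        (φ : W [⋀^Fin (r + n)]→ₗ[ℂ] ℂ),
        ‖φ (fun i => Fin.append (x ∘ K) (l ∘ J) (Fin.cast h.symm i))‖ ≤
          (4 * ζ⁻¹ * Real.sqrt ((n + r : ℕ) : ℝ)) ^ (n + r) * ‖φ T₀‖ := by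
  subst hB₀ hw hT₀ hL
  have hE := linearIndependent_complexFrame σ hinv (fun i => hx (K₀ i)) ha
  have hT : LinearIndependent ℂ (Fin.append (x ∘ K₀) (l ∘ J₀)) := by
    simpa [complexFrame, comp_def] using hE.comp _ (Fin.castAdd_injective (r + n) n)
  refine ⟨hT, fun r₁ n₁ h K J φ => ?_⟩
  have hspan : span ℂ (Set.range x ∪ Set.range l) ≤
      span ℂ (Set.range (Fin.append (x ∘ K₀) (l ∘ J₀))) := by
    have := FiniteDimensional.span_of_finite ℂ ((Set.finite_range x).union (Set.finite_range l))
    refine (eq_of_le_of_finrank_eq (span_le.2 ?_) ?_).ge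
    · rintro - ⟨p, rfl⟩; exact subset_span (Fin.append_comp_mem_range_union x l K₀ J₀ p)
    · rw [finrank_span_eq_card hT, hnr, Fintype.card_fin, add_comm]
  have hu (i : Fin (r + n)) := Fin.append_comp_mem_range_union x l K J (Fin.cast h.symm i)
  choose A hA hAC using fun i => exists_coeffs_le_of_forall_alternatingMap_le σ x l K₀ J₀ ha hE hb
    (hu i) (hspan (subset_span (hu i)))
  have hρ : √((r + n : ℕ) : ℝ) * (2 * ζ⁻¹) ≤ 4 * ζ⁻¹ * √((r + n : ℕ) : ℝ) := by
    nlinarith [mul_nonneg (inv_nonneg.2 hζ0.le) (Real.sqrt_nonneg ((r + n : ℕ) : ℝ))]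
  have hbound :=
    φ.norm_map_sum_smul_le (Fin.append (x ∘ K₀) (l ∘ J₀)) A (by positivity) hAC
  simp only [hA, Fintype.card_fin] at hbound
  rw [add_comm n r]
  exact hbound.trans (by gcongr)

/-- Proposition on quotients of wedge products, real ⇒ complex direction.
If the real tuple `B₀ = (x∘K₀, 2 Re(l∘J₀), 2 Im(l∘J₀))` is ℝ-linearly independent and every
alternating ℝ-multilinear form `ψ` satisfies `|ψ(w ∘ P)| ≤ ζ⁻¹ |ψ(B₀)|` for all `P`, then
the tuple `T₀ = (x∘K₀, l∘J₀)` is ℂ-linearly independent and every alternating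
ℂ-multilinear form `φ` satisfies `‖φ(x∘K, l∘J)‖ ≤ (4 ζ⁻¹ √(n+r))^(n+r) ‖φ(T₀)‖` for all
concatenations of total length `r + n`. -/
theorem wedge_quotient_real_to_complex
    (W : Type*) [AddCommGroup W] [Module ℂ W]
    (σ : W →ₛₗ[starRingEnd ℂ] W) (hinv : ∀ w : W, σ (σ w) = w)
    (q m r n : ℕ) (ζ : ℝ) (hζ0 : 0 < ζ) (hζ1 : ζ ≤ 1)
    (x : Fin q → W) (hx : ∀ k, σ (x k) = x k) (l : Fin m → W)
    (L : Submodule ℂ W) (hL : L = Submodule.span ℂ (Set.range x ∪ Set.range l))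
    (hX : Submodule.span ℂ (Set.range x) = L ⊓ Submodule.map σ L)
    (hr : Module.finrank ℂ ↥(L ⊓ Submodule.map σ L) = r)
    (hnr : Module.finrank ℂ ↥L = n + r)
    (K₀ : Fin r → Fin q) (J₀ : Fin n → Fin m)
    (B₀ : Fin (r + n + n) → W)
    (hB₀ : B₀ = Fin.append
      (Fin.append (x ∘ K₀) (fun j => (2 : ℂ) • conjRe σ (l (J₀ j))))
      (fun j => (2 : ℂ) • conjIm σ (l (J₀ j))))
    (w : Fin (q + m + m) → W)
    (hw : w = Fin.append
      (Fin.append x (fun j => (2 : ℂ) • conjRe σ (l j)))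
      (fun j => (2 : ℂ) • conjIm σ (l j)))
    (ha : LinearIndependent ℝ B₀)
    (hb : ∀ (P : Fin (r + n + n) → Fin (q + m + m)) (ψ : W [⋀^Fin (r + n + n)]→ₗ[ℝ] ℝ),
      |ψ (w ∘ P)| ≤ ζ⁻¹ * |ψ B₀|)
    (T₀ : Fin (r + n) → W) (hT₀ : T₀ = Fin.append (x ∘ K₀) (l ∘ J₀)) :
    LinearIndependent ℂ T₀ ∧
      ∀ (r₁ n₁ : ℕ) (h : r₁ + n₁ = r + n) (K : Fin r₁ → Fin q) (J : Fin n₁ → Fin m)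
        (φ : W [⋀^Fin (r + n)]→ₗ[ℂ] ℂ),
        ‖φ (fun i => Fin.append (x ∘ K) (l ∘ J) (Fin.cast h.symm i))‖ ≤
          (4 * ζ⁻¹ * Real.sqrt ((n + r : ℕ) : ℝ)) ^ (n + r) * ‖φ T₀‖ :=
  wedge_quotient_real_to_complex_general W σ hinv q m r n ζ hζ0 x hx l L hL hnr K₀ J₀ B₀ hB₀ w hw ha
    hb T₀ hT₀
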